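/- arXiv:1904.12379 — 2 statements merged into one kernel-verified Lean document; each statement's English description precedes it below -/
import Mathlib

section
/- Let U be a normed vector space, let c > 0 and M ≥ 0 be reals, let N ≥ 2 be an integer, and let u_0, u_1, …, u_N ∈ U satisfy u_0 = 0 and ‖u_{n+1} − (2+c)u_n + u_{n−1}‖ ≤ M for every n with 1 ≤ n ≤ N−1. Then ‖u_n − a_n u_{n+1}‖ ≤ n·M for every n with 1 ≤ n ≤ N−1, where (a_n) is the sequence defined by a_1 = 1/(2+c) and a_n = 1/(2 + c − a_{n−1}) for n ≥ 2. -/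
/-- The sequence `a₁ = 1/(2+c)`, `aₙ = 1/(2 + c - a_{n-1})` for `n ≥ 2`
(the value at index `0` is a junk value, unused). -/
noncomputable def genLinesSeq (c : ℝ) : ℕ → ℝ
  | 0 => 0
  | 1 => 1 / (2 + c)
  | n + 2 => 1 / (2 + c - genLinesSeq c (n + 1))

lemma genLinesSeq_bounds (c : ℝ) (hc : 0 < c) :
    ∀ n, 0 < genLinesSeq c (n + 1) ∧ genLinesSeq c (n + 1) < 1 := by
  intro n
  induction n with
  | zero =>
    constructor
    · show 0 < 1 / (2 + c); positivity
    · show 1 / (2 + c) < 1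
      rw [div_lt_one (by linarith)]; linarith
  | succ k ih =>
    have h1 : 1 < 2 + c - genLinesSeq c (k + 1) := by linarith [ih.2]
    constructor
    · show 0 < 1 / (2 + c - genLinesSeq c (k + 1))
      positivity
    · show 1 / (2 + c - genLinesSeq c (k + 1)) < 1
      rw [div_lt_one (by linarith)]; exact h1

/-- Error-propagation estimate for the proximal three-point recurrence: if `u₀ = 0`
and `‖u_{n+1} - (2+c)uₙ + u_{n-1}‖ ≤ M` for `1 ≤ n ≤ N-1`, then
`‖uₙ - aₙ u_{n+1}‖ ≤ n·M` for `1 ≤ n ≤ N-1`. -/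
theorem error_propagation_estimate
    {U : Type*} [NormedAddCommGroup U] [NormedSpace ℝ U]
    (c M : ℝ) (hc : 0 < c) (hM : 0 ≤ M)
    (N : ℕ) (hN : 2 ≤ N) (u : ℕ → U) (hu0 : u 0 = 0)
    (hrec : ∀ n : ℕ, 1 ≤ n → n ≤ N - 1 →
      ‖u (n + 1) - (2 + c) • u n + u (n - 1)‖ ≤ M) :
    ∀ n : ℕ, 1 ≤ n → n ≤ N - 1 →
      ‖u n - genLinesSeq c n • u (n + 1)‖ ≤ (n : ℝ) * M := by
  intro n
  induction n with
  | zero => intro h; omega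
  | succ k ih =>
    intro _ hle
    rcases Nat.eq_zero_or_pos k with rfl | hk
    · -- base case n = 1
      have hr := hrec 1 le_rfl (by omega)
      simp only [hu0, add_zero] at hr
      have ha : genLinesSeq c 1 = 1 / (2 + c) := rfl
      have hpos : (0:ℝ) < 2 + c := by linarith
      have key : u 1 - genLinesSeq c 1 • u 2
          = (-(genLinesSeq c 1)) • (u 2 - (2 + c) • u 1) := by
        have h2 : genLinesSeq c 1 * (2 + c) = 1 := by
          rw [ha]; field_simp
        match_scalars <;> first | ring1 | linear_combination -h2
      rw [key, norm_smul, Real.norm_eq_abs, abs_neg,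
        abs_of_pos (genLinesSeq_bounds c hc 0).1]
      have h3 : genLinesSeq c 1 * ‖u 2 - (2 + c) • u 1‖ ≤ 1 * M := by
        apply mul_le_mul (le_of_lt (genLinesSeq_bounds c hc 0).2) hr (norm_nonneg _)
        norm_num
      simpa using h3
    · -- inductive step: n = k + 1, k ≥ 1
      obtain ⟨m, rfl⟩ : ∃ m, k = m + 1 := ⟨k - 1, by omega⟩
      have ihk := ih (by omega) (by omega)
      have hr := hrec (m + 2) (by omega) (by omega)
      simp only [Nat.add_sub_cancel, show m + 2 - 1 = m + 1 by omega] at hr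
      have hbk := genLinesSeq_bounds c hc m
      have hbk1 := genLinesSeq_bounds c hc (m + 1)
      have hden : 1 < 2 + c - genLinesSeq c (m + 1) := by linarith [hbk.2]
      have ha : genLinesSeq c (m + 2) * (2 + c - genLinesSeq c (m + 1)) = 1 := by
        show (1 / (2 + c - genLinesSeq c (m + 1))) * _ = 1
        field_simp
      have key : u (m + 2) - genLinesSeq c (m + 2) • u (m + 3)
          = genLinesSeq c (m + 2) •
            ((u (m + 1) - genLinesSeq c (m + 1) • u (m + 2))
              - (u (m + 3) - (2 + c) • u (m + 2) + u (m + 1))) := by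
        match_scalars <;> first | ring1 | linear_combination -ha
      have htri : ‖(u (m + 1) - genLinesSeq c (m + 1) • u (m + 2))
              - (u (m + 3) - (2 + c) • u (m + 2) + u (m + 1))‖
          ≤ ((m + 1 : ℕ) : ℝ) * M + M := by
        calc _ ≤ ‖u (m + 1) - genLinesSeq c (m + 1) • u (m + 2)‖
              + ‖u (m + 3) - (2 + c) • u (m + 2) + u (m + 1)‖ := norm_sub_le _ _
          _ ≤ ((m + 1 : ℕ) : ℝ) * M + M := by
              have : u (m + 3) = u (m + 2 + 1) := by norm_num
              rw [this]
              exact add_le_add ihk hr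
      rw [key, norm_smul, Real.norm_eq_abs, abs_of_pos hbk1.1]
      have h4 : genLinesSeq c (m + 2) * ‖(u (m + 1) - genLinesSeq c (m + 1) • u (m + 2))
              - (u (m + 3) - (2 + c) • u (m + 2) + u (m + 1))‖
          ≤ 1 * (((m + 1 : ℕ) : ℝ) * M + M) := by
        apply mul_le_mul (le_of_lt hbk1.2) htri (norm_nonneg _)
        norm_num
      have : (((m + 1 + 1 : ℕ)) : ℝ) * M = ((m + 1 : ℕ) : ℝ) * M + M := by
        push_cast; ring
      rw [this]
      linarith
end

section
/- Let δ > 0, K ≥ 0, R > 0 and b, w ∈ ℝ, and define T : ℝ → ℝ by T(x) = (b + x + (x − x³)δ + K w δ)/(3 + Kδ). Then for all x, y ∈ [−R, R] one has |T(x) − T(y)| ≤ α|x − y| with α = (1 + (3R² + 1)δ)/(3 + Kδ). Moreover, if K ≥ 3R² + 1 then α < 1, so T is a contraction on the interval [−R, R]. -/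
/-!
The numerator of `T x - T y` factors as `(x - y) (1 + (1 - (x² + xy + y²)) δ)`, because
`x³ - y³ = (x - y)(x² + xy + y²)`. On `[-R, R]` the quadratic form `x² + xy + y²` lies in
`[0, 3R²]`, so the second factor has modulus at most `1 + (3R² + 1) δ`; dividing by the
positive denominator `3 + Kδ` gives the Lipschitz constant, which is `< 1` as soon as
`K ≥ 3R² + 1`, since then the numerator falls short of the denominator by at least `2`.
-/

lemma sq_add_mul_add_sq_nonneg (x y : ℝ) : 0 ≤ x ^ 2 + x * y + y ^ 2 := by
  nlinarith [sq_nonneg (x + y), sq_nonneg x, sq_nonneg y]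

lemma sq_add_mul_add_sq_le {x y R : ℝ} (hx : |x| ≤ R) (hy : |y| ≤ R) :
    x ^ 2 + x * y + y ^ 2 ≤ 3 * R ^ 2 := by
  have hx2 : x ^ 2 ≤ R ^ 2 := sq_le_sq' (abs_le.mp hx).1 (abs_le.mp hx).2
  have hy2 : y ^ 2 ≤ R ^ 2 := sq_le_sq' (abs_le.mp hy).1 (abs_le.mp hy).2
  have hxy : x * y ≤ R ^ 2 := by
    calc x * y ≤ |x| * |y| := by rw [← abs_mul]; exact le_abs_self _
      _ ≤ R * R := mul_le_mul hx hy (abs_nonneg y) ((abs_nonneg x).trans hx)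
      _ = R ^ 2 := (sq R).symm
  linarith

lemma abs_one_add_one_sub_mul_le {s S δ : ℝ} (hs₀ : 0 ≤ s) (hsS : s ≤ S) (hδ : 0 ≤ δ) :
    |1 + (1 - s) * δ| ≤ 1 + (S + 1) * δ := by
  rw [abs_le]
  constructor <;> nlinarith [mul_le_mul_of_nonneg_right hsS hδ, mul_nonneg hs₀ hδ]

lemma abs_add_sub_cube_mul_sub_le {x y R δ : ℝ} (hx : |x| ≤ R) (hy : |y| ≤ R) (hδ : 0 ≤ δ) :
    |(x + (x - x ^ 3) * δ) - (y + (y - y ^ 3) * δ)| ≤ (1 + (3 * R ^ 2 + 1) * δ) * |x - y| := by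
  have hfactor : (x + (x - x ^ 3) * δ) - (y + (y - y ^ 3) * δ)
      = (1 + (1 - (x ^ 2 + x * y + y ^ 2)) * δ) * (x - y) := by ring
  rw [hfactor, abs_mul]
  exact mul_le_mul_of_nonneg_right
    (abs_one_add_one_sub_mul_le (sq_add_mul_add_sq_nonneg x y) (sq_add_mul_add_sq_le hx hy) hδ)
    (abs_nonneg _)

theorem proximal_GL_operator_contraction_general
    (δ K R b w : ℝ) (hδ : 0 < δ) (hK : 0 ≤ K)
    (T : ℝ → ℝ)
    (hT : ∀ x, T x = (b + x + (x - x ^ 3) * δ + K * w * δ) / (3 + K * δ)) :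
    (∀ x ∈ Set.Icc (-R) R, ∀ y ∈ Set.Icc (-R) R,
        |T x - T y| ≤ ((1 + (3 * R ^ 2 + 1) * δ) / (3 + K * δ)) * |x - y|) ∧
      (3 * R ^ 2 + 1 ≤ K → (1 + (3 * R ^ 2 + 1) * δ) / (3 + K * δ) < 1) := by
  have hD : 0 < 3 + K * δ := by positivity
  refine ⟨fun x hx y hy => ?_, fun hKR => ?_⟩
  · have hnum : T x - T y = ((x + (x - x ^ 3) * δ) - (y + (y - y ^ 3) * δ)) / (3 + K * δ) := by
      rw [hT, hT]; ring
    rw [hnum, abs_div, abs_of_pos hD, div_mul_eq_mul_div]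
    exact div_le_div_of_nonneg_right
      (abs_add_sub_cube_mul_sub_le (abs_le.mpr hx) (abs_le.mpr hy) hδ.le) hD.le
  · rw [div_lt_one hD]
    linarith [mul_le_mul_of_nonneg_right hKR hδ.le]

/-- The proximal single-line operator for the Ginzburg–Landau nonlinearity,
`T(x) = (b + x + (x - x³)δ + Kwδ)/(3 + Kδ)`, satisfies on `[-R, R]` the Lipschitz
bound `|T x - T y| ≤ α|x - y|` with `α = (1 + (3R² + 1)δ)/(3 + Kδ)`; moreover if
`K ≥ 3R² + 1` then `α < 1`, so `T` is a contraction on `[-R, R]`. -/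
theorem proximal_GL_operator_contraction
    (δ K R b w : ℝ) (hδ : 0 < δ) (hK : 0 ≤ K) (hR : 0 < R)
    (T : ℝ → ℝ)
    (hT : ∀ x, T x = (b + x + (x - x ^ 3) * δ + K * w * δ) / (3 + K * δ)) :
    (∀ x ∈ Set.Icc (-R) R, ∀ y ∈ Set.Icc (-R) R,
        |T x - T y| ≤ ((1 + (3 * R ^ 2 + 1) * δ) / (3 + K * δ)) * |x - y|) ∧
      (3 * R ^ 2 + 1 ≤ K → (1 + (3 * R ^ 2 + 1) * δ) / (3 + K * δ) < 1) :=
  proximal_GL_operator_contraction_general δ K R b w hδ hK T hT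
end
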